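/- Let λ and μ be partitions of n, and let N_λ, N_μ be nilpotent n×n complex matrices of Jordan types λ and μ respectively. Then rank(N_μ^i) ≤ rank(N_λ^i) for all i ≥ 1 if and only if μ is dominated by λ in the dominance order. -/

import Mathlib

/-- The canonical nilpotent `n × n` matrix of Jordan type `f` (a direct sum of
Jordan blocks whose sizes are the parts of `f`, laid out consecutively). -/
noncomputable def jordanOfType (F : Type) [Field F] (n : ℕ) (f : ℕ → ℕ) :
    Matrix (Fin n) (Fin n) F :=
  Matrix.of fun a b => open scoped Classical in
    if (b : ℕ) = (a : ℕ) + 1 ∧ ∀ k : ℕ, (b : ℕ) ≠ ∑ i ∈ Finset.range k, f i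
    then 1 else 0

/-- Dominance order on partitions: `f` dominates `g` iff every partial sum of
`g` is at most the corresponding partial sum of `f`. -/
def Dominates (f g : ℕ → ℕ) : Prop :=
  ∀ m : ℕ, ∑ i ∈ Finset.range m, g i ≤ ∑ i ∈ Finset.range m, f i

/-!
Both sides are statements about the numbers `r_λ(i) = ∑ₖ (λₖ - i)₊`. The `i`-th power of the
Jordan matrix of type `λ` is a partial permutation matrix, with one entry `1` in the column of
every position lying at least `i` places after the start of its Jordan block; so its rank is
`r_λ(i)`, and for `i = 0` both ranks are `n`. If `λ` dominates `μ` and `m` parts of `μ` exceed `i`,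
then `r_μ(i) + m i = μ₁ + ⋯ + μₘ ≤ λ₁ + ⋯ + λₘ ≤ r_λ(i) + m i`. Conversely, for `i = λₘ`,
`λ₁ + ⋯ + λₘ = r_λ(i) + m i ≥ r_μ(i) + m i ≥ μ₁ + ⋯ + μₘ`.
-/

open Finset
open scoped Matrix

section TruncatedSums

variable {a : ℕ → ℕ} {c m K : ℕ}

theorem sum_range_le_sum_tsub_add_mul (a : ℕ → ℕ) (hmK : m ≤ K) (c : ℕ) :
    ∑ k ∈ range m, a k ≤ ∑ k ∈ range K, (a k - c) + m * c :=
  calc ∑ k ∈ range m, a k ≤ ∑ k ∈ range m, ((a k - c) + c) :=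
        sum_le_sum fun _ _ => le_tsub_add
    _ = ∑ k ∈ range m, (a k - c) + m * c := by simp [sum_add_distrib]
    _ ≤ ∑ k ∈ range K, (a k - c) + m * c := by gcongr

theorem sum_tsub_add_mul_eq_sum_range (hmK : m ≤ K) (hlo : ∀ k < m, c ≤ a k)
    (hhi : ∀ k, m ≤ k → a k ≤ c) :
    ∑ k ∈ range K, (a k - c) + m * c = ∑ k ∈ range m, a k := by
  have htail : ∑ k ∈ Ico m K, (a k - c) = 0 :=
    sum_eq_zero fun k hk => tsub_eq_zero_of_le (hhi k (mem_Ico.1 hk).1)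
  rw [← sum_range_add_sum_Ico _ hmK, htail, add_zero,
    ← sum_congr rfl fun k hk => tsub_add_cancel_of_le (hlo k (mem_range.1 hk)),
    sum_add_distrib, sum_const, card_range, smul_eq_mul]

theorem Antitone.exists_threshold (ha : Antitone a) (hK : a K ≤ c) :
    ∃ m ≤ K, (∀ k < m, c ≤ a k) ∧ ∀ k, m ≤ k → a k ≤ c := by
  classical
  have hex : ∃ m, a m ≤ c := ⟨K, hK⟩
  refine ⟨Nat.find hex, Nat.find_min' hex hK, fun k hk => ?_, fun k hk => ?_⟩
  · exact le_of_lt (not_le.1 (Nat.find_min hex hk))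
  · exact (ha hk).trans (Nat.find_spec hex)

theorem sum_range_min_eq (hK : ∀ k, K ≤ k → a k = 0) (m : ℕ) :
    ∑ k ∈ range (min m K), a k = ∑ k ∈ range m, a k := by
  rcases le_total m K with h | h
  · rw [min_eq_left h]
  · rw [min_eq_right h, eventually_constant_sum hK h]

end TruncatedSums

theorem dominates_iff_forall_sum_tsub_le {f g : ℕ → ℕ} {K : ℕ} (hf : Antitone f)
    (hg : Antitone g) (hfK : ∀ k, K ≤ k → f k = 0) (hgK : ∀ k, K ≤ k → g k = 0) :
    Dominates f g ↔ ∀ c, ∑ k ∈ range K, (g k - c) ≤ ∑ k ∈ range K, (f k - c) := by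
  constructor
  · intro hdom c
    obtain ⟨m, hmK, hlo, hhi⟩ := hg.exists_threshold ((hgK K le_rfl).trans_le (Nat.zero_le c))
    have hg_eq := sum_tsub_add_mul_eq_sum_range hmK hlo hhi
    have hf_le := sum_range_le_sum_tsub_add_mul f hmK c
    have := hdom m
    omega
  · intro hsum m
    rw [← sum_range_min_eq hfK, ← sum_range_min_eq hgK]
    have hmK : min m K ≤ K := min_le_right m K
    set m' := min m K
    have hf_eq := sum_tsub_add_mul_eq_sum_range (a := f) (c := f (m' - 1)) hmK
      (fun k hk => hf (by omega)) (fun k hk => hf (by omega))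
    have hg_le := sum_range_le_sum_tsub_add_mul g hmK (f (m' - 1))
    have := hsum (f (m' - 1))
    omega

theorem Matrix.rank_eq_card_of_row_eq_single {m n R : Type*} [Fintype m] [Fintype n]
    [DecidableEq n] [Field R] (M : Matrix m n R) (S : Finset m) (σ : m → n)
    (hσ : Set.InjOn σ S) (hS : ∀ a ∈ S, M a = Pi.single (σ a) 1) (hSc : ∀ a ∉ S, M a = 0) :
    M.rank = #S := by
  have hspan : Submodule.span R (Set.range M.row) =
      Submodule.span R (Set.range fun a : S => (Pi.single (σ a) 1 : n → R)) := by
    refine le_antisymm (Submodule.span_le.2 ?_) (Submodule.span_mono ?_)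
    · rintro _ ⟨a, rfl⟩
      by_cases ha : a ∈ S
      · exact Submodule.subset_span ⟨⟨a, ha⟩, (hS a ha).symm⟩
      · simp [Matrix.row, hSc a ha]
    · rintro _ ⟨a, rfl⟩
      exact ⟨a, hS a a.2⟩
  have hli : LinearIndependent R fun a : S => (Pi.single (σ a) 1 : n → R) := by
    simpa only [Function.comp_def, Pi.basisFun_apply] using (Pi.basisFun R n).linearIndependent.comp
      (fun a : S => σ a) fun a b h => Subtype.ext (hσ a.2 b.2 h)
  rw [M.rank_eq_finrank_span_row, hspan, finrank_span_eq_card hli, Fintype.card_coe]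

theorem Matrix.rank_units_conj {ι R : Type*} [Fintype ι] [DecidableEq ι] [CommRing R]
    (P : GL ι R) (A : Matrix ι ι R) :
    ((P : Matrix ι ι R) * A * ((P⁻¹ : GL ι R) : Matrix ι ι R)).rank = A.rank := by
  rw [rank_mul_eq_left_of_isUnit_det _ _ ((isUnit_iff_isUnit_det _).1 (P⁻¹).isUnit),
    rank_mul_eq_right_of_isUnit_det _ _ ((isUnit_iff_isUnit_det _).1 P.isUnit)]

/-- No Jordan block of type `f` starts in `(a, b]`: the blocks start at the partial sums of `f`. -/
def NoBlockStartIn (f : ℕ → ℕ) (a b : ℕ) : Prop :=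
  ∀ c, a < c → c ≤ b → ∀ k, c ≠ ∑ j ∈ range k, f j

theorem noBlockStartIn_succ_right {f : ℕ → ℕ} {a b : ℕ} (hab : a ≤ b) :
    NoBlockStartIn f a (b + 1) ↔ NoBlockStartIn f a b ∧ ∀ k, b + 1 ≠ ∑ j ∈ range k, f j := by
  refine ⟨fun h => ⟨fun c hac hcb => h c hac (by omega), h (b + 1) (by omega) le_rfl⟩,
    fun ⟨h, hb⟩ c hac hcb => ?_⟩
  rcases Nat.lt_or_eq_of_le hcb with hcb | rfl
  · exact h c hac (by omega)
  · exact hb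

theorem noBlockStartIn_self (f : ℕ → ℕ) (a : ℕ) : NoBlockStartIn f a a :=
  fun _ h₁ h₂ => absurd h₂ (by omega)

theorem ne_sum_range_of_lt_of_lt {f : ℕ → ℕ} {c k : ℕ} (hk : ∑ j ∈ range k, f j < c)
    (hk' : c < ∑ j ∈ range (k + 1), f j) (m : ℕ) : c ≠ ∑ j ∈ range m, f j := by
  rintro rfl
  rcases le_or_gt m k with hm | hm
  · exact (sum_le_sum_of_subset (range_subset_range.2 hm)).not_gt hk
  · exact (sum_le_sum_of_subset (range_subset_range.2 hm)).not_gt hk'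

open scoped Classical in
theorem filter_Ico_sum_range_noBlockStartIn (f : ℕ → ℕ) (i k : ℕ) :
    {b ∈ Ico (∑ j ∈ range k, f j) (∑ j ∈ range (k + 1), f j) |
        i ≤ b ∧ NoBlockStartIn f (b - i) b} =
      Ico (∑ j ∈ range k, f j + i) (∑ j ∈ range (k + 1), f j) := by
  ext b
  simp only [mem_filter, mem_Ico]
  constructor
  · rintro ⟨⟨hkb, hbk⟩, hib, hno⟩
    refine ⟨?_, hbk⟩
    by_contra! hlt
    exact hno _ (by omega) hkb k rfl
  · rintro ⟨hkb, hbk⟩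
    exact ⟨⟨by omega, hbk⟩, by omega, fun c hc hcb =>
      ne_sum_range_of_lt_of_lt (k := k) (by omega) (by omega)⟩

open scoped Classical in
theorem card_filter_range_noBlockStartIn (f : ℕ → ℕ) (i K : ℕ) :
    #{b ∈ range (∑ j ∈ range K, f j) | i ≤ b ∧ NoBlockStartIn f (b - i) b} =
      ∑ k ∈ range K, (f k - i) := by
  induction K with
  | zero => simp
  | succ K ih =>
    have hmono : ∑ j ∈ range K, f j ≤ ∑ j ∈ range (K + 1), f j :=
      sum_le_sum_of_subset (range_subset_range.2 K.le_succ)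
    rw [range_eq_Ico, ← Ico_union_Ico_eq_Ico (Nat.zero_le _) hmono, filter_union,
      card_union_of_disjoint (disjoint_filter_filter (Ico_disjoint_Ico_consecutive _ _ _)),
      ← range_eq_Ico, ih, filter_Ico_sum_range_noBlockStartIn, Nat.card_Ico, sum_range_succ,
      sum_range_succ]
    omega

section JordanOfType

variable {F : Type} [Field F] {n : ℕ} {f : ℕ → ℕ}

open scoped Classical in
theorem jordanOfType_pow_apply (i : ℕ) (a b : Fin n) :
    (jordanOfType F n f ^ i) a b =
      if (b : ℕ) = a + i ∧ NoBlockStartIn f a b then 1 else 0 := by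
  induction i generalizing b with
  | zero =>
    rw [pow_zero, Matrix.one_apply]
    refine if_congr ⟨fun h => ?_, fun h => Fin.ext h.1.symm⟩ rfl rfl
    subst h
    exact ⟨rfl, noBlockStartIn_self f a⟩
  | succ i ih =>
    rw [pow_succ, Matrix.mul_apply]
    simp only [ih]
    simp only [jordanOfType, Matrix.of_apply, ite_zero_mul_ite_zero, one_mul]
    by_cases hb : (b : ℕ) = a + i + 1
    · rw [sum_eq_single ⟨a + i, by omega⟩]
      · simp only [hb, ← add_assoc, noBlockStartIn_succ_right (Nat.le_add_right a i), true_and]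
      · intro c _ hc
        rw [if_neg]
        rintro ⟨⟨h, -⟩, -⟩
        exact hc (Fin.ext h)
      · simp
    · rw [if_neg (by omega)]
      exact sum_eq_zero fun c _ => if_neg (by omega)

open scoped Classical in
theorem rank_jordanOfType_pow {K : ℕ} (hK : ∑ j ∈ range K, f j = n) (i : ℕ) :
    (jordanOfType F n f ^ i).rank = ∑ k ∈ range K, (f k - i) := by
  let S : Finset (Fin n) := {b | i ≤ b ∧ NoBlockStartIn f (b - i) b}
  have hS (b : Fin n) (hb : b ∈ S) :
      (jordanOfType F n f ^ i)ᵀ b = Pi.single ⟨b - i, by omega⟩ 1 := by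
    simp only [S, mem_filter, mem_univ, true_and] at hb
    ext a
    rw [Matrix.transpose_apply, jordanOfType_pow_apply, Pi.single_apply]
    refine if_congr ⟨fun h => Fin.ext (by dsimp only; omega), fun h => ?_⟩ rfl rfl
    subst h
    exact ⟨by dsimp only; omega, hb.2⟩
  have hSc (b : Fin n) (hb : b ∉ S) : (jordanOfType F n f ^ i)ᵀ b = 0 := by
    simp only [S, mem_filter, mem_univ, true_and] at hb
    ext a
    rw [Matrix.transpose_apply, jordanOfType_pow_apply, if_neg, Pi.zero_apply]
    rintro ⟨h, hno⟩
    exact hb ⟨by omega, by rwa [show (b : ℕ) - i = a by omega]⟩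
  have hinj : Set.InjOn (fun b : Fin n => (⟨b - i, by omega⟩ : Fin n)) S := by
    intro b hb b' hb' h
    simp only [S, mem_coe, mem_filter, mem_univ, true_and, Fin.mk.injEq] at hb hb' h
    exact Fin.ext (by omega)
  rw [← Matrix.rank_transpose, Matrix.rank_eq_card_of_row_eq_single _ S _ hinj hS hSc,
    ← card_filter_range_noBlockStartIn f i K, hK, ← Nat.Iio_eq_range, ← Fin.map_valEmbedding_univ,
    filter_map, card_map]
  rfl

end JordanOfType

/-- Let `λ = f` and `μ = g` be partitions of `n`, and `Nf`, `Ng` nilpotent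
complex `n × n` matrices of Jordan types `λ`, `μ`.  Then
`rank(Ng ^ i) ≤ rank(Nf ^ i)` for all `i ≥ 1` iff `μ` is dominated by `λ`. -/
theorem stmt11 (n : ℕ) (f g : ℕ → ℕ) (Kf Kg : ℕ)
    (hf : Antitone f) (hg : Antitone g)
    (hfK : ∀ j, Kf ≤ j → f j = 0) (hgK : ∀ j, Kg ≤ j → g j = 0)
    (hfsum : ∑ j ∈ Finset.range Kf, f j = n)
    (hgsum : ∑ j ∈ Finset.range Kg, g j = n)
    (Nf Ng : Matrix (Fin n) (Fin n) ℂ)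
    (hNf : ∃ P : Matrix.GeneralLinearGroup (Fin n) ℂ,
        Nf = (P : Matrix (Fin n) (Fin n) ℂ) * jordanOfType ℂ n f *
          ((P⁻¹ : Matrix.GeneralLinearGroup (Fin n) ℂ) : Matrix (Fin n) (Fin n) ℂ))
    (hNg : ∃ P : Matrix.GeneralLinearGroup (Fin n) ℂ,
        Ng = (P : Matrix (Fin n) (Fin n) ℂ) * jordanOfType ℂ n g *
          ((P⁻¹ : Matrix.GeneralLinearGroup (Fin n) ℂ) : Matrix (Fin n) (Fin n) ℂ)) :
    (∀ i : ℕ, 1 ≤ i → (Ng ^ i).rank ≤ (Nf ^ i).rank) ↔ Dominates f g := by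
  obtain ⟨P, rfl⟩ := hNf
  obtain ⟨Q, rfl⟩ := hNg
  set K := max Kf Kg
  have hfK' (k : ℕ) (hk : K ≤ k) : f k = 0 := hfK k (le_of_max_le_left hk)
  have hgK' (k : ℕ) (hk : K ≤ k) : g k = 0 := hgK k (le_of_max_le_right hk)
  have hfsum' : ∑ j ∈ range K, f j = n := by
    rw [eventually_constant_sum hfK (le_max_left Kf Kg), hfsum]
  have hgsum' : ∑ j ∈ range K, g j = n := by
    rw [eventually_constant_sum hgK (le_max_right Kf Kg), hgsum]
  simp only [Units.conj_pow, Matrix.rank_units_conj, rank_jordanOfType_pow hfsum',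
    rank_jordanOfType_pow hgsum']
  rw [dominates_iff_forall_sum_tsub_le hf hg hfK' hgK']
  refine ⟨fun h i => ?_, fun h i _ => h i⟩
  rcases Nat.eq_zero_or_pos i with rfl | hi
  · simp only [tsub_zero, hfsum', hgsum', le_refl]
  · exact h i hi
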